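/- Let M be a matroid on a finite ground set E, and let F ⊊ G be flats of M. Let k be an integer with 1 ≤ k ≤ rk(G) − rk(F). Then the following identity holds in ℝ^E: Σ_{F = F^(0) ⋖ F^(1) ⋖ ⋯ ⋖ F^(k), F^(k) ⊆ G} (e_{F^(k)} − e_{F^(k−1)}) + Σ_{l=1}^{k−1} (−1)^{k−l} · Σ_{F = F^(0) ⋖ ⋯ ⋖ F^(l), F^(l) ⊆ G} (e_G − e_{F^(l−1)}) + (−1)^k · (e_G − e_F) = 0, where each inner sum ranges over all chains F = F^(0) ⋖ F^(1) ⋖ ⋯ ⋖ F^(l) of flats of M such that each consecutive pair is a cover relation and F^(l) ⊆ G. (This is the (i,k)-balancing condition of Theorem 3.1, stated for the consecutive flats F = F_i and G = F_{i+1} of a flag.) -/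

import Mathlib

/-
For a flat `H ⊆ G`, every `y ∈ G \ H` lies in exactly one cover of `H` inside `G`, namely
`cl(H ∪ {y})`, so `Σ_{H ⋖ H' ⊆ G} (e_{H'} − e_H) = e_G − e_H`. Applied to the last step of
a chain, this turns the sum over `(n+1)`-chains of `e_{F⁽ⁿ⁺¹⁾} − e_{F⁽ⁿ⁾}` into
`C_n = Σ_{n-chains} (e_G − e_{F⁽ⁿ⁾})`. Hence the first sum is `C_{k−1}`, the `l`-th inner sum
is `C_l + C_{l−1}`, the last term is `(−1)^k C_0`, and the alternating sum telescopes to `0`.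
-/

open scoped BigOperators

/-- The `0-1` indicator vector `e_F ∈ ℝ^E` of a subset `F ⊆ E`. -/
noncomputable def eVec {α : Type*} (F : Set α) : α → ℝ := F.indicator 1

/-- The rank of a set `X` in a matroid `M`: the largest cardinality of an
independent subset of `X`. -/
noncomputable def mrk {α : Type*} (M : Matroid α) (X : Set α) : ℕ :=
  sSup {n : ℕ | ∃ I, M.Indep I ∧ I ⊆ X ∧ I.ncard = n}

/-- `F'` covers `F` in the lattice of flats of `M`: both are flats, `F ⊊ F'`,
and there is no flat strictly between them. -/
def MCov {α : Type*} (M : Matroid α) (F F' : Set α) : Prop :=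
  M.IsFlat F ∧ M.IsFlat F' ∧ F ⊂ F' ∧ ¬ ∃ F'', M.IsFlat F'' ∧ F ⊂ F'' ∧ F'' ⊂ F'

/-- A chain `F = F⁽⁰⁾ ⋖ F⁽¹⁾ ⋖ ⋯ ⋖ F⁽ˡ⁾` of flats of `M` with `F⁽ˡ⁾ ⊆ G`. -/
def IsCovChain {α : Type*} (M : Matroid α) (F G : Set α) (l : ℕ)
    (c : Fin (l + 1) → Set α) : Prop :=
  c 0 = F ∧ (∀ j : Fin l, MCov M (c j.castSucc) (c j.succ)) ∧ c (Fin.last l) ⊆ G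

open Set Matroid

lemma Matroid.IsFlat.closure_subset_of_subset {α : Type*} {M : Matroid α} {F X : Set α}
    (hF : M.IsFlat F) (hXF : X ⊆ F) : M.closure X ⊆ F :=
  hF.closure ▸ M.closure_subset_closure hXF

section Covers

variable {α : Type*} {M : Matroid α} {F G H H' : Set α} {e : α} {l : ℕ}

lemma mCov_closure_insert (hH : M.IsFlat H) (he : e ∈ M.E) (heH : e ∉ H) :
    MCov M H (M.closure (insert e H)) := by
  have hsub : H ⊆ M.closure (insert e H) := M.subset_closure_of_subset' (subset_insert e H)
  have he_mem : e ∈ M.closure (insert e H) := M.mem_closure_of_mem' (mem_insert e H)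
  refine ⟨hH, M.isFlat_closure _, hsub.ssubset_of_ne fun h ↦ heH (h ▸ he_mem), ?_⟩
  rintro ⟨H'', hH'', hHH'', hH''cl⟩
  obtain ⟨y, hyH'', hyH⟩ := exists_of_ssubset hHH''
  -- exchange: `y ∈ cl(H + e) \ cl H` forces `e ∈ cl(H + y) ⊆ H''`
  have heH'' : e ∈ H'' :=
    hH''.closure_subset_of_subset (insert_subset hyH'' hHH''.subset)
      (M.mem_closure_insert (hH.closure.symm ▸ hyH) (hH''cl.subset hyH''))
  exact hH''cl.not_subset (hH''.closure_subset_of_subset (insert_subset heH'' hHH''.subset))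

lemma MCov.eq_closure_insert (h : MCov M H H') (he : e ∈ H') (heH : e ∉ H) :
    H' = M.closure (insert e H) := by
  obtain ⟨hH, hH', hHH', hnot⟩ := h
  have hcl : M.closure (insert e H) ⊆ H' :=
    hH'.closure_subset_of_subset (insert_subset he hHH'.subset)
  by_contra hne
  exact hnot ⟨_, M.isFlat_closure _,
    (mCov_closure_insert hH (hH'.subset_ground he) heH).2.2.1, hcl.ssubset_of_ne (Ne.symm hne)⟩

lemma IsCovChain.isFlat {c : Fin (l + 1) → Set α} (hF : M.IsFlat F) (hc : IsCovChain M F G l c)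
    (j : Fin (l + 1)) : M.IsFlat (c j) := by
  cases j using Fin.cases with
  | zero => exact hc.1 ▸ hF
  | succ i => exact (hc.2.1 i).2.1

lemma isCovChain_snoc_iff {c : Fin (l + 1) → Set α} :
    IsCovChain M F G (l + 1) (Fin.snoc c H) ↔
      IsCovChain M F G l c ∧ MCov M (c (Fin.last l)) H ∧ H ⊆ G := by
  simp only [IsCovChain, Fin.forall_fin_succ', Fin.succ_castSucc, Fin.snoc_castSucc,
    Fin.succ_last, Fin.snoc_last]
  rw [← Fin.castSucc_zero, Fin.snoc_castSucc]
  exact ⟨fun ⟨h0, ⟨hstep, hlast⟩, hH⟩ ↦ ⟨⟨h0, hstep, hlast.2.2.1.subset.trans hH⟩, hlast, hH⟩,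
    fun ⟨⟨h0, hstep, _⟩, hlast, hH⟩ ↦ ⟨h0, ⟨hstep, hlast⟩, hH⟩⟩

end Covers

section Finite

variable {α : Type*} [Finite α] {M : Matroid α} {F G H H' : Set α} {l : ℕ}

noncomputable def coversIn (M : Matroid α) (H G : Set α) : Finset (Set α) :=
  (Set.toFinite {H' | MCov M H H' ∧ H' ⊆ G}).toFinset

lemma mem_coversIn : H' ∈ coversIn M H G ↔ MCov M H H' ∧ H' ⊆ G :=
  Set.Finite.mem_toFinset _

lemma sum_coversIn_eVec_sub (hH : M.IsFlat H) (hG : M.IsFlat G) (hHG : H ⊆ G) :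
    ∑ H' ∈ coversIn M H G, (eVec H' - eVec H) = eVec G - eVec H := by
  ext y
  simp only [Finset.sum_apply, Pi.sub_apply]
  by_cases hyH : y ∈ H
  · rw [Finset.sum_eq_zero fun H' hH' ↦ ?_]
    · simp [eVec, hyH, hHG hyH]
    · simp [eVec, hyH, (mem_coversIn.1 hH').1.2.2.1.subset hyH]
  by_cases hyG : y ∈ G
  · have hcov : M.closure (insert y H) ∈ coversIn M H G :=
      mem_coversIn.2 ⟨mCov_closure_insert hH (hG.subset_ground hyG) hyH,
        hG.closure_subset_of_subset (insert_subset hyG hHG)⟩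
    rw [Finset.sum_eq_single_of_mem _ hcov fun H' hH' hne ↦ ?_]
    · simp [eVec, hyH, hyG, M.mem_closure_of_mem' (mem_insert y H) (hG.subset_ground hyG)]
    · have hyH' : y ∉ H' := fun hyH' ↦ hne ((mem_coversIn.1 hH').1.eq_closure_insert hyH' hyH)
      simp [eVec, hyH, hyH']
  · rw [Finset.sum_eq_zero fun H' hH' ↦ ?_]
    · simp [eVec, hyH, hyG]
    · have hyH' : y ∉ H' := fun hyH' ↦ hyG ((mem_coversIn.1 hH').2 hyH')
      simp [eVec, hyH, hyH']

noncomputable def coverChains (M : Matroid α) (F G : Set α) (l : ℕ) :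
    Finset (Fin (l + 1) → Set α) :=
  (Set.toFinite {c | IsCovChain M F G l c}).toFinset

lemma mem_coverChains {c : Fin (l + 1) → Set α} :
    c ∈ coverChains M F G l ↔ IsCovChain M F G l c :=
  Set.Finite.mem_toFinset _

lemma finsum_isCovChain_eq_sum {V : Type*} [AddCommMonoid V] (f : (Fin (l + 1) → Set α) → V) :
    ∑ᶠ c ∈ {c | IsCovChain M F G l c}, f c = ∑ c ∈ coverChains M F G l, f c :=
  finsum_mem_eq_finite_toFinset_sum f _

lemma sum_coverChains_succ {V : Type*} [AddCommMonoid V] (f : (Fin (l + 2) → Set α) → V) :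
    ∑ c ∈ coverChains M F G (l + 1), f c =
      ∑ c ∈ coverChains M F G l, ∑ H ∈ coversIn M (c (Fin.last l)) G, f (Fin.snoc c H) := by
  rw [Finset.sum_sigma']
  refine (Finset.sum_nbij' (fun p ↦ Fin.snoc p.1 p.2) (fun c ↦ ⟨Fin.init c, c (Fin.last _)⟩)
    ?_ ?_ ?_ ?_ ?_).symm
  · rintro ⟨c, H⟩ hp
    rw [Finset.mem_sigma, mem_coverChains, mem_coversIn] at hp
    exact mem_coverChains.2 (isCovChain_snoc_iff.2 hp)
  · intro c hc
    rw [mem_coverChains, ← Fin.snoc_init_self c] at hc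
    rw [Finset.mem_sigma, mem_coverChains, mem_coversIn]
    exact isCovChain_snoc_iff.1 hc
  · rintro ⟨c, H⟩ -
    simp
  · rintro c -
    exact Fin.snoc_init_self c
  · rintro p -
    rfl

noncomputable def chainGapSum (M : Matroid α) (F G : Set α) (l : ℕ) : α → ℝ :=
  ∑ c ∈ coverChains M F G l, (eVec G - eVec (c (Fin.last l)))

lemma chainGapSum_zero (hFG : F ⊆ G) : chainGapSum M F G 0 = eVec G - eVec F := by
  have hchains : coverChains M F G 0 = {fun _ ↦ F} := by
    ext c
    simp only [mem_coverChains, Finset.mem_singleton, IsCovChain, IsEmpty.forall_iff,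
      Fin.last_zero]
    constructor
    · rintro ⟨h0, -, -⟩
      funext j
      rwa [Fin.fin_one_eq_zero j]
    · rintro rfl
      exact ⟨rfl, trivial, hFG⟩
  rw [chainGapSum, hchains, Finset.sum_singleton]

variable (hF : M.IsFlat F) (hG : M.IsFlat G)
include hF hG

lemma sum_coverChains_succ_eVec_sub (n : ℕ) :
    ∑ c ∈ coverChains M F G (n + 1),
      (eVec (c (Fin.last (n + 1))) - eVec (c (Fin.last n).castSucc)) = chainGapSum M F G n := by
  rw [sum_coverChains_succ]
  refine Finset.sum_congr rfl fun c hc ↦ ?_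
  have hc := mem_coverChains.1 hc
  simp only [Fin.snoc_last, Fin.snoc_castSucc]
  exact sum_coversIn_eVec_sub (hc.isFlat hF _) hG hc.2.2

lemma finsum_isCovChain_eVec_last_sub {k : ℕ} (hk : 1 ≤ k) (h : k - 1 < k + 1) :
    ∑ᶠ c ∈ {c | IsCovChain M F G k c}, (eVec (c (Fin.last k)) - eVec (c ⟨k - 1, h⟩)) =
      chainGapSum M F G (k - 1) := by
  obtain ⟨n, rfl⟩ : ∃ n, k = n + 1 := ⟨k - 1, by omega⟩
  have hpen : (⟨n + 1 - 1, h⟩ : Fin (n + 2)) = (Fin.last n).castSucc := Fin.ext (by simp)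
  rw [finsum_isCovChain_eq_sum, hpen, Nat.add_sub_cancel]
  exact sum_coverChains_succ_eVec_sub hF hG n

lemma finsum_isCovChain_top_sub_eVec (hl : 1 ≤ l) (h : l - 1 < l + 1) :
    ∑ᶠ c ∈ {c | IsCovChain M F G l c}, (eVec G - eVec (c ⟨l - 1, h⟩)) =
      chainGapSum M F G l + chainGapSum M F G (l - 1) := by
  obtain ⟨n, rfl⟩ : ∃ n, l = n + 1 := ⟨l - 1, by omega⟩
  have hpen : (⟨n + 1 - 1, h⟩ : Fin (n + 2)) = (Fin.last n).castSucc := Fin.ext (by simp)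
  rw [finsum_isCovChain_eq_sum, hpen, Nat.add_sub_cancel, ← sum_coverChains_succ_eVec_sub hF hG n,
    chainGapSum, ← Finset.sum_add_distrib]
  exact Finset.sum_congr rfl fun c _ ↦ (sub_add_sub_cancel _ _ _).symm

end Finite

lemma alternating_sum_Icc_telescope {R V : Type*} [Ring R] [AddCommGroup V] [Module R V]
    (C : ℕ → V) {k : ℕ} (hk : 1 ≤ k) :
    C (k - 1) + ∑ l ∈ Finset.Icc 1 (k - 1), ((-1 : R) ^ (k - l)) • (C l + C (l - 1))
      + ((-1 : R) ^ k) • C 0 = 0 := by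
  induction k, hk using Nat.le_induction with
  | base => simp
  | succ k hk ih =>
    obtain ⟨n, rfl⟩ : ∃ n, k = n + 1 := ⟨k - 1, by omega⟩
    have hsign : ∀ l ∈ Finset.Icc 1 n, ((-1 : R) ^ (n + 2 - l)) • (C l + C (l - 1))
        = -(((-1 : R) ^ (n + 1 - l)) • (C l + C (l - 1))) := by
      intro l hl
      rw [show n + 2 - l = n + 1 - l + 1 by grind, pow_succ, mul_neg_one, neg_smul]
    simp only [Nat.add_sub_cancel] at ih ⊢
    rw [Finset.sum_Icc_succ_top (by omega), Finset.sum_congr rfl hsign, Finset.sum_neg_distrib,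
      show n + 2 - (n + 1) = 1 by omega, pow_one, pow_succ (-1 : R) (n + 1), mul_neg_one,
      Nat.add_sub_cancel]
    simp only [neg_smul, one_smul]
    rw [← neg_eq_zero, ← ih]
    abel

/-- The `(i,k)`-balancing condition (Theorem 3.1), for consecutive flats
`F = F_i ⊊ G = F_{i+1}` of a flag and `1 ≤ k ≤ rk G − rk F`:
`Σ_{F=F⁽⁰⁾⋖⋯⋖F⁽ᵏ⁾⊆G} (e_{F⁽ᵏ⁾} − e_{F⁽ᵏ⁻¹⁾})
 + Σ_{l=1}^{k−1} (−1)^{k−l} Σ_{F=F⁽⁰⁾⋖⋯⋖F⁽ˡ⁾⊆G} (e_G − e_{F⁽ˡ⁻¹⁾})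
 + (−1)^k (e_G − e_F) = 0`. -/
theorem higher_balancing {α : Type*} [Fintype α] (M : Matroid α)
    (F G : Set α) (hF : M.IsFlat F) (hG : M.IsFlat G) (hFG : F ⊂ G)
    (k : ℕ) (hk1 : 1 ≤ k) :
    (∑ᶠ c ∈ {c : Fin (k + 1) → Set α | IsCovChain M F G k c},
        (eVec (c (Fin.last k)) - eVec (c ⟨k - 1, by omega⟩)))
      + (∑ l ∈ Finset.Icc 1 (k - 1), ((-1 : ℝ) ^ (k - l)) •
          (∑ᶠ c ∈ {c : Fin (l + 1) → Set α | IsCovChain M F G l c},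
            (eVec G - eVec (c ⟨l - 1, by omega⟩))))
      + ((-1 : ℝ) ^ k) • (eVec G - eVec F) = 0 := by
  rw [finsum_isCovChain_eVec_last_sub hF hG hk1,
    Finset.sum_congr rfl fun l hl ↦ by
      rw [finsum_isCovChain_top_sub_eVec hF hG (Finset.mem_Icc.1 hl).1],
    ← chainGapSum_zero hFG.subset]
  exact alternating_sum_Icc_telescope _ hk1
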